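/- Let a, b, μ be natural numbers with a < μ < b, and let p ∈ V_μ satisfy p_n > 0 for all a ≤ n ≤ b and C₀ := ∑_{n≥0} 2ⁿ·p_n < ∞. Let k₁, k₂ be real numbers with k₁ ≥ −log(1 − μ/b) and k₂ ≥ log C₀. Then the generalized entropy production is nonpositive: ∑_{n=a}^{b} L[p]_n·log p_n + k₁·∑_{n=b+1}^{∞} n·L[p]_n + k₂·∑_{n=0}^{a−1} (a−n)·L[p]_n ≤ 0. (Along a solution t ↦ p(t) of the mean-field ODE system p′_n = L[p]_n, the left-hand side equals the time derivative of the generalized Boltzmann entropy H̃_ab[p] = ∑_{n=0}^{a−1} p_n + ∑_{n=a}^{b} p_n log p_n + ∑_{n=b+1}^{∞} p_n + k₁·∑_{n=b+1}^{∞} n·p_n + k₂·∑_{n=0}^{a−1} (a−n)·p_n.) -/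

import Mathlib

/-
Write `L[p]_n = Φ (n + 1) - Φ n`, where `Φ` is the probability current. Summation by parts turns
the middle sum into `∑_{a ≤ n < b} J_n (log p_n - log p_{n+1})` plus boundary terms of sign `≤ 0`,
with `J_n = λ_r p_{n+1} - λ_g p_n`; the tail sum into `-λ_r (T + b p_{b+1})`, `T = ∑_{n>b} p_n`;
and the head sum into `-λ_g A`, `A = ∑_{n<a} p_n`. Monotonicity of `log` gives
`J_n (log p_n - log p_{n+1}) ≤ J_n K` with `K = log λ_r - log λ_g`, and `∑ J_n = λ_g A - λ_r T`,
so, as `k₁ ≥ 0`, the total is at most `λ_g A (K - k₂) - λ_r T (K + k₁)`. Finally `-K ≤ k₁`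
because `λ_r ≥ 1 - μ/b` (Markov), and `K ≤ k₂` because `λ_g C₀ ≥ 1`: as `∑_{n>a} n p_n ≥ μ - a ≥ 1`,
Jensen for `n ↦ 2ⁿ` on the part of `p` above `a` gives `C₀ ≥ (1 - λ_g) + λ_g 2^{1/λ_g}`, and
`t² - t + 1 ≤ 2^t` for `t ≥ 1` turns this into `C₀ ≥ 1/λ_g`.
-/

open scoped BigOperators

/-- `lamr b p = ∑_{ℓ=0}^{b-1} p_ℓ`, the proportion of receivers. -/
noncomputable def lamr (b : ℕ) (p : ℕ → ℝ) : ℝ := ∑ ℓ ∈ Finset.range b, p ℓ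

/-- `lamg a p = ∑_{ℓ≥a+1} p_ℓ`, the proportion of givers. -/
noncomputable def lamg (a : ℕ) (p : ℕ → ℝ) : ℝ := ∑' ℓ : ℕ, if a + 1 ≤ ℓ then p ℓ else 0

/-- The mean-field operator `L[p]_n`. -/
noncomputable def Lop (a b : ℕ) (p : ℕ → ℝ) (n : ℕ) : ℝ :=
  lamr b p * ((if a ≤ n then p (n + 1) else 0) - (if a + 1 ≤ n then p n else 0))
    + lamg a p * ((if 1 ≤ n ∧ n ≤ b then p (n - 1) else 0) - (if n ≤ b - 1 then p n else 0))

/-- `V_μ`: probability mass functions on ℕ with mean `μ`. -/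
def memV (μ : ℕ) (p : ℕ → ℝ) : Prop :=
  (∀ n, 0 ≤ p n) ∧ HasSum p 1 ∧ HasSum (fun n : ℕ => (n : ℝ) * p n) (μ : ℝ)

/-- The tail sum `∑_{n≥m} p_n`. -/
noncomputable def tailSum (m : ℕ) (p : ℕ → ℝ) : ℝ := ∑' n : ℕ, if m ≤ n then p n else 0

open Finset Real

theorem tsum_ite_le_eq_tsum_add {M : Type*} [AddCommMonoid M] [TopologicalSpace M]
    (f : ℕ → M) (m : ℕ) : ∑' n, (if m ≤ n then f n else 0) = ∑' n, f (n + m) := by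
  rw [← (add_left_injective m).tsum_eq (f := fun n => if m ≤ n then f n else 0)]
  · simp
  · intro n hn
    simp only [Function.mem_support, ne_eq, ite_eq_right_iff, Classical.not_imp] at hn
    exact ⟨n - m, Nat.sub_add_cancel hn.1⟩

theorem tailSum_eq_sub {p : ℕ → ℝ} {s : ℝ} (h : HasSum p s) (m : ℕ) :
    tailSum m p = s - ∑ n ∈ range m, p n := by
  rw [tailSum, tsum_ite_le_eq_tsum_add]
  exact ((hasSum_nat_add_iff' m).mpr h).tsum_eq

theorem hasSum_tailSum {p : ℕ → ℝ} {s : ℝ} (h : HasSum p s) (m : ℕ) :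
    HasSum (fun n => p (n + m)) (tailSum m p) := by
  rw [tailSum_eq_sub h]
  exact (hasSum_nat_add_iff' m).mpr h

theorem tailSum_nonneg {p : ℕ → ℝ} (hnn : ∀ n, 0 ≤ p n) (m : ℕ) : 0 ≤ tailSum m p :=
  tsum_nonneg fun n => by split_ifs <;> simp [hnn]

theorem tailSum_le_div {p : ℕ → ℝ} {μ : ℝ} (hnn : ∀ n, 0 ≤ p n)
    (hμ : HasSum (fun n : ℕ => (n : ℝ) * p n) μ) {m : ℕ} (hm : 0 < m) :
    tailSum m p ≤ μ / m := by
  have hm' : (0 : ℝ) < m := Nat.cast_pos.mpr hm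
  have hle : ∀ n, (if m ≤ n then p n else 0) ≤ (n : ℝ) * p n / m := fun n => by
    split_ifs with h
    · rw [le_div_iff₀ hm', mul_comm]
      exact mul_le_mul_of_nonneg_right (Nat.cast_le.mpr h) (hnn n)
    · exact div_nonneg (mul_nonneg n.cast_nonneg (hnn n)) hm'.le
  have hsum : Summable fun n => if m ≤ n then p n else 0 :=
    .of_nonneg_of_le (fun n => by split_ifs <;> simp [hnn]) hle (hμ.div_const m).summable
  exact hasSum_le hle hsum.hasSum (hμ.div_const m)

/-- Jensen's inequality for `exp`: sum the tangent line `exp x ≥ exp m * (1 + x - m)` at the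
mean `m = M / W`. -/
theorem mul_exp_div_le_of_hasSum {ι : Type*} {w x : ι → ℝ} {W M E : ℝ} (hw : ∀ i, 0 ≤ w i)
    (hW : HasSum w W) (hM : HasSum (fun i => x i * w i) M)
    (hE : HasSum (fun i => exp (x i) * w i) E) (hW0 : 0 < W) :
    W * exp (M / W) ≤ E := by
  set m := M / W
  have htangent : ∀ i, exp m * (w i + x i * w i - m * w i) ≤ exp (x i) * w i := fun i => by
    have h := mul_le_mul_of_nonneg_left (add_one_le_exp (x i - m)) (exp_pos m).le
    rw [← exp_add, add_sub_cancel] at h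
    nlinarith [hw i]
  have hline := ((hW.add hM).sub (hW.mul_left m)).mul_left (exp m)
  have hmW : m * W = M := div_mul_cancel₀ M hW0.ne'
  calc W * exp m = exp m * (W + M - m * W) := by rw [hmW]; ring
    _ ≤ E := hasSum_le htangent hline hE

theorem sq_sub_add_one_le_two_rpow {t : ℝ} (ht : 1 ≤ t) : t ^ 2 - t + 1 ≤ (2 : ℝ) ^ t := by
  set s := t - 1
  have hs : 0 ≤ s := sub_nonneg.mpr ht
  have hL : 0.693 * s ≤ s * log 2 := by nlinarith [log_two_gt_d9]
  have h2 := pow_le_pow_left₀ (by positivity) hL 2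
  have h3 := pow_le_pow_left₀ (by positivity) hL 3
  have htaylor : 1 + s * log 2 + (s * log 2) ^ 2 / 2 + (s * log 2) ^ 3 / 6 ≤ exp (s * log 2) := by
    have h := sum_le_exp_of_nonneg (mul_nonneg hs (log_nonneg one_le_two)) 4
    simp only [sum_range_succ, sum_range_zero, Nat.factorial] at h
    norm_num at h
    linarith
  have h2t : (2 : ℝ) ^ t = 2 * exp (s * log 2) := by
    rw [show t = 1 + s by ring, rpow_add two_pos, rpow_one, rpow_def_of_pos two_pos, mul_comm s]
  rw [h2t, show t = s + 1 by ring]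
  nlinarith [mul_nonneg hs (sq_nonneg (s - 27 / 10))]

section Lambdas

variable {a b : ℕ} {p : ℕ → ℝ}

theorem lamr_pos (hnn : ∀ n, 0 ≤ p n) {n : ℕ} (hn : n < b) (hpn : 0 < p n) : 0 < lamr b p :=
  hpn.trans_le (single_le_sum (fun i _ => hnn i) (mem_range.mpr hn))

theorem lamr_le_one (hnn : ∀ n, 0 ≤ p n) (h1 : HasSum p 1) : lamr b p ≤ 1 :=
  sum_le_hasSum _ (fun i _ => hnn i) h1

theorem lamg_pos (hnn : ∀ n, 0 ≤ p n) (hp : Summable p) {n : ℕ} (hn : a < n) (hpn : 0 < p n) :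
    0 < lamg a p := by
  have hnn' : ∀ i, 0 ≤ if a + 1 ≤ i then p i else 0 := fun i => by split_ifs <;> simp [hnn]
  refine Summable.tsum_pos (.of_nonneg_of_le hnn' (fun i => ?_) hp) hnn' n ?_
  · split_ifs
    exacts [le_rfl, hnn i]
  rwa [if_pos (Nat.succ_le_of_lt hn)]

theorem lamg_eq_one_sub (h1 : HasSum p 1) : lamg a p = 1 - ∑ n ∈ range (a + 1), p n :=
  tailSum_eq_sub h1 (a + 1)

theorem lamg_le_one (hnn : ∀ n, 0 ≤ p n) (h1 : HasSum p 1) : lamg a p ≤ 1 := by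
  rw [lamg_eq_one_sub h1]
  linarith [sum_nonneg fun n (_ : n ∈ range (a + 1)) => hnn n]

end Lambdas

theorem inv_lamg_le_tsum_two_pow_mul {a μ : ℕ} {p : ℕ → ℝ} (hp : memV μ p) (hau : a < μ)
    (hC0 : Summable fun n : ℕ => (2 : ℝ) ^ n * p n) (hd : 0 < lamg a p) :
    (lamg a p)⁻¹ ≤ ∑' n : ℕ, (2 : ℝ) ^ n * p n := by
  obtain ⟨hnn, h1, hμ⟩ := hp
  set d := lamg a p
  have hd_eq : d = 1 - ∑ n ∈ range (a + 1), p n := lamg_eq_one_sub h1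
  set M := (μ : ℝ) - ∑ n ∈ range (a + 1), (n : ℝ) * p n
  have hjensen : d * exp (M * log 2 / d)
      ≤ ∑' n : ℕ, (2 : ℝ) ^ n * p n - ∑ n ∈ range (a + 1), (2 : ℝ) ^ n * p n := by
    refine mul_exp_div_le_of_hasSum (w := fun n => p (n + (a + 1)))
      (x := fun n => ((n + (a + 1) : ℕ) : ℝ) * log 2) (fun n => hnn _) (hasSum_tailSum h1 _)
      ?_ ?_ hd
    · exact (((hasSum_nat_add_iff' (a + 1)).mpr hμ).mul_right (log 2)).congr_fun fun n => by ring
    · exact ((hasSum_nat_add_iff' (a + 1)).mpr hC0.hasSum).congr_fun fun n => by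
        rw [exp_nat_mul, exp_log two_pos]
  have hM : 1 ≤ M := by
    have hmean : ∑ n ∈ range (a + 1), (n : ℝ) * p n ≤ a * (1 - d) := by
      rw [hd_eq, sub_sub_cancel, mul_sum]
      exact sum_le_sum fun n hn => mul_le_mul_of_nonneg_right
        (Nat.cast_le.mpr (Nat.lt_succ_iff.mp (mem_range.mp hn))) (hnn n)
    have : (a : ℝ) + 1 ≤ μ := by exact_mod_cast hau
    nlinarith [a.cast_nonneg (α := ℝ)]
  have hhead : 1 - d ≤ ∑ n ∈ range (a + 1), (2 : ℝ) ^ n * p n := by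
    rw [hd_eq, sub_sub_cancel]
    exact sum_le_sum fun n _ => le_mul_of_one_le_left (hnn n) (one_le_pow₀ one_le_two)
  have hexp : d⁻¹ ^ 2 - d⁻¹ + 1 ≤ exp (M * log 2 / d) :=
    calc d⁻¹ ^ 2 - d⁻¹ + 1 ≤ (2 : ℝ) ^ d⁻¹ :=
          sq_sub_add_one_le_two_rpow ((one_le_inv₀ hd).mpr (lamg_le_one hnn h1))
      _ = exp (log 2 * d⁻¹) := rpow_def_of_pos two_pos _
      _ ≤ exp (M * log 2 / d) := by
          rw [div_eq_mul_inv]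
          gcongr
          exact le_mul_of_one_le_left (log_nonneg one_le_two) hM
  calc d⁻¹ = (1 - d) + d * (d⁻¹ ^ 2 - d⁻¹ + 1) := by field_simp; ring
    _ ≤ ∑ n ∈ range (a + 1), (2 : ℝ) ^ n * p n + d * exp (M * log 2 / d) :=
        add_le_add hhead (mul_le_mul_of_nonneg_left hexp hd.le)
    _ ≤ ∑' n : ℕ, (2 : ℝ) ^ n * p n := by linarith

section SummationByParts

variable {R : Type*} [CommRing R]

theorem sum_Icc_sub_mul_eq (Φ f : ℕ → R) {a b : ℕ} (hab : a ≤ b) :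
    ∑ n ∈ Icc a b, (Φ (n + 1) - Φ n) * f n
      = Φ (b + 1) * f b - Φ a * f a + ∑ n ∈ Ico a b, Φ (n + 1) * (f n - f (n + 1)) := by
  induction b, hab using Nat.le_induction with
  | base => simp only [Icc_self, sum_singleton, Ico_self, sum_empty, add_zero]; ring
  | succ b hab ih =>
    rw [sum_Icc_succ_top (by omega), ih, sum_Ico_succ_top hab]
    ring

theorem sum_range_sub_mul_eq (Φ : ℕ → R) (a : ℕ) :
    ∑ n ∈ range a, ((a : R) - n) * (Φ (n + 1) - Φ n) = ∑ n ∈ range a, Φ (n + 1) - a * Φ 0 := by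
  induction a with
  | zero => simp
  | succ a ih =>
    simp only [Nat.cast_succ, add_sub_right_comm _ (1 : R), add_mul, one_mul, sum_add_distrib,
      sum_range_sub, sum_range_succ _ a, ih]
    ring

end SummationByParts

theorem tsum_add_mul_sub_eq (q : ℕ → ℝ) (s : ℝ) (hq : Summable q)
    (hsq : Summable fun n : ℕ => ((n : ℝ) + s) * q n) :
    ∑' n : ℕ, ((n : ℝ) + s) * (q (n + 1) - q n) = (1 - s) * q 0 - ∑' n, q n := by
  set u : ℕ → ℝ := fun n => ((n : ℝ) + s - 1) * q n
  have hu : Summable u := (hsq.sub hq).congr fun n => by ring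
  have hu' : Summable fun n => u (n + 1) := (summable_nat_add_iff 1).mpr hu
  have hsplit : ∀ n : ℕ, ((n : ℝ) + s) * (q (n + 1) - q n) = (u (n + 1) - u n) - q n :=
    fun n => by simp only [u]; push_cast; ring
  rw [tsum_congr hsplit, (hu'.sub hu).tsum_sub hq, hu'.tsum_sub hu, hu.tsum_eq_zero_add]
  simp only [u]
  push_cast
  ring

theorem mul_sub_mul_mul_log_sub_le {x y u v : ℝ} (hx : 0 < x) (hy : 0 < y) (hu : 0 < u)
    (hv : 0 < v) : (x * u - y * v) * (log v - log u) ≤ (x * u - y * v) * (log x - log y) := by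
  have hmono : 0 ≤ (x * u - y * v) * (log (x * u) - log (y * v)) := by
    rcases le_total (y * v) (x * u) with h | h
    · exact mul_nonneg (sub_nonneg.2 h) (sub_nonneg.2 (log_le_log (by positivity) h))
    · exact mul_nonneg_of_nonpos_of_nonpos (sub_nonpos.2 h)
        (sub_nonpos.2 (log_le_log (by positivity) h))
  rw [log_mul hx.ne' hu.ne', log_mul hy.ne' hv.ne'] at hmono
  linarith

section Flux

/-- The net probability current across the edge `{n - 1, n}`, downwards: mass at `n > a` moves
down at rate `λ_r`, mass at `n - 1 < b` moves up at rate `λ_g`. -/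
noncomputable def flux (a b : ℕ) (p : ℕ → ℝ) (n : ℕ) : ℝ :=
  lamr b p * (if a + 1 ≤ n then p n else 0) - lamg a p * (if 1 ≤ n ∧ n ≤ b then p (n - 1) else 0)

variable {a b : ℕ} {p : ℕ → ℝ}

theorem Lop_eq_flux_sub (hb : 1 ≤ b) (n : ℕ) :
    Lop a b p n = flux a b p (n + 1) - flux a b p n := by
  unfold Lop flux
  simp only [Nat.add_sub_cancel]
  split_ifs <;> first | omega | ring

theorem flux_zero : flux a b p 0 = 0 := by
  simp [flux]

theorem flux_succ_of_lt (hab : a < b) {n : ℕ} (hn : n < a) :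
    flux a b p (n + 1) = -(lamg a p * p n) := by
  rw [flux, if_neg (by omega), if_pos (by omega), Nat.add_sub_cancel]
  ring

theorem flux_succ_of_mem_Ico {n : ℕ} (hn : n ∈ Ico a b) :
    flux a b p (n + 1) = lamr b p * p (n + 1) - lamg a p * p n := by
  obtain ⟨han, hnb⟩ := mem_Ico.mp hn
  rw [flux, if_pos (by omega), if_pos (by omega), Nat.add_sub_cancel]

theorem flux_of_lt (hab : a < b) {n : ℕ} (hn : b < n) : flux a b p n = lamr b p * p n := by
  rw [flux, if_pos (by omega), if_neg (by omega)]
  ring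

theorem flux_self_nonpos (hnn : ∀ n, 0 ≤ p n) (hd : 0 ≤ lamg a p) : flux a b p a ≤ 0 := by
  rw [flux, if_neg (by omega), mul_zero, zero_sub, neg_nonpos]
  split_ifs
  exacts [mul_nonneg hd (hnn _), (mul_zero _).ge]

theorem sum_Ico_flux_succ (hab : a < b) (h1 : HasSum p 1) :
    ∑ n ∈ Ico a b, flux a b p (n + 1)
      = lamg a p * ∑ n ∈ range a, p n - lamr b p * tailSum (b + 1) p := by
  rw [sum_congr rfl fun n hn => flux_succ_of_mem_Ico hn, sum_sub_distrib, ← mul_sum, ← mul_sum,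
    sum_Ico_add' p, sum_Ico_eq_sub _ (by omega), sum_Ico_eq_sub _ hab.le, tailSum_eq_sub h1,
    lamg_eq_one_sub h1, lamr]
  simp only [sum_range_succ]
  ring

end Flux

section EntropyProduction

variable {a b : ℕ} {p : ℕ → ℝ}

theorem sum_Icc_Lop_mul_log_le (hab : a < b) (hnn : ∀ n, 0 ≤ p n) (h1 : HasSum p 1)
    (hpos : ∀ n, a ≤ n → n ≤ b → 0 < p n) (hc : 0 < lamr b p) (hd : 0 < lamg a p) :
    ∑ n ∈ Icc a b, Lop a b p n * log (p n)
      ≤ (log (lamr b p) - log (lamg a p))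
        * (lamg a p * ∑ n ∈ range a, p n - lamr b p * tailSum (b + 1) p) := by
  have hlog : ∀ n, log (p n) ≤ 0 := fun n =>
    log_nonpos (hnn n) (le_hasSum h1 n fun j _ => hnn j)
  have htop : flux a b p (b + 1) * log (p b) ≤ 0 := by
    rw [flux_of_lt hab (by omega)]
    exact mul_nonpos_of_nonneg_of_nonpos (mul_nonneg hc.le (hnn _)) (hlog b)
  have hbot : 0 ≤ flux a b p a * log (p a) :=
    mul_nonneg_of_nonpos_of_nonpos (flux_self_nonpos hnn hd.le) (hlog a)
  have hedges : ∑ n ∈ Ico a b, flux a b p (n + 1) * (log (p n) - log (p (n + 1)))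
      ≤ ∑ n ∈ Ico a b, flux a b p (n + 1) * (log (lamr b p) - log (lamg a p)) :=
    sum_le_sum fun n hn => by
      obtain ⟨han, hnb⟩ := mem_Ico.mp hn
      rw [flux_succ_of_mem_Ico hn]
      exact mul_sub_mul_mul_log_sub_le hc hd (hpos _ (by omega) hnb) (hpos _ han hnb.le)
  rw [← sum_mul, sum_Ico_flux_succ hab h1] at hedges
  rw [sum_congr rfl fun n _ => by rw [Lop_eq_flux_sub (by omega)], sum_Icc_sub_mul_eq _ _ hab.le]
  linarith

theorem tsum_ite_mul_Lop_eq (hab : a < b) (hp : Summable p)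
    (hnp : Summable fun n : ℕ => (n : ℝ) * p n) :
    ∑' n : ℕ, (if b + 1 ≤ n then (n : ℝ) * Lop a b p n else 0)
      = -(lamr b p * (b * p (b + 1) + tailSum (b + 1) p)) := by
  set q : ℕ → ℝ := fun n => lamr b p * p (n + (b + 1))
  have hLop : ∀ n : ℕ, ((n + (b + 1) : ℕ) : ℝ) * Lop a b p (n + (b + 1))
      = ((n : ℝ) + (b + 1)) * (q (n + 1) - q n) := fun n => by
    rw [Lop_eq_flux_sub (by omega), flux_of_lt hab (by omega), flux_of_lt hab (by omega)]
    simp only [q, Nat.add_right_comm n 1]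
    push_cast
    ring
  have hq : Summable q := ((summable_nat_add_iff (b + 1)).mpr hp).mul_left _
  have hsq : Summable fun n : ℕ => ((n : ℝ) + (b + 1)) * q n :=
    (((summable_nat_add_iff (b + 1)).mpr hnp).mul_left (lamr b p)).congr fun n => by
      simp only [q]
      push_cast
      ring
  rw [tsum_ite_le_eq_tsum_add, tsum_congr hLop, tsum_add_mul_sub_eq q _ hq hsq, tsum_mul_left,
    tailSum, tsum_ite_le_eq_tsum_add]
  simp only [q, zero_add]
  ring

theorem sum_range_mul_Lop_eq (hab : a < b) :
    ∑ n ∈ range a, ((a : ℝ) - n) * Lop a b p n = -(lamg a p * ∑ n ∈ range a, p n) := by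
  rw [sum_congr rfl fun n _ => by rw [Lop_eq_flux_sub (by omega)], sum_range_sub_mul_eq, flux_zero,
    sum_congr rfl fun n hn => flux_succ_of_lt hab (mem_range.mp hn), sum_neg_distrib, mul_sum]
  ring

end EntropyProduction

section LogBounds

variable {a b μ : ℕ} {p : ℕ → ℝ}

theorem log_lamg_sub_log_lamr_le (hp : memV μ p) (hub : μ < b) :
    log (lamg a p) - log (lamr b p) ≤ -log (1 - μ / b) := by
  obtain ⟨hnn, h1, hμ⟩ := hp
  have hb : 0 < b := μ.zero_le.trans_lt hub
  have hμb : 0 < 1 - (μ : ℝ) / b := by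
    rw [sub_pos, div_lt_one (Nat.cast_pos.mpr hb)]
    exact_mod_cast hub
  have hc : 1 - (μ : ℝ) / b ≤ lamr b p := by
    have hmarkov := tailSum_le_div hnn hμ hb
    rw [tailSum_eq_sub h1] at hmarkov
    rw [lamr]
    linarith
  linarith [log_le_log hμb hc,
    log_nonpos (x := lamg a p) (tailSum_nonneg hnn (a + 1)) (lamg_le_one hnn h1)]

theorem log_lamr_sub_log_lamg_le (hp : memV μ p) (hau : a < μ)
    (hC0 : Summable fun n : ℕ => (2 : ℝ) ^ n * p n) (hd : 0 < lamg a p) :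
    log (lamr b p) - log (lamg a p) ≤ log (∑' n : ℕ, (2 : ℝ) ^ n * p n) := by
  have hc := log_nonpos (x := lamr b p) (sum_nonneg fun n _ => hp.1 n) (lamr_le_one hp.1 hp.2.1)
  have hd' := log_le_log (inv_pos.2 hd) (inv_lamg_le_tsum_two_pow_mul hp hau hC0 hd)
  rw [log_inv] at hd'
  linarith

end LogBounds

theorem generalized_entropy_production_nonpositive (a b μ : ℕ)
    (hau : a < μ) (hub : μ < b) (p : ℕ → ℝ) (hp : memV μ p)
    (hpos : ∀ n, a ≤ n → n ≤ b → 0 < p n)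
    (hC0 : Summable (fun n : ℕ => (2 : ℝ) ^ n * p n))
    (k₁ k₂ : ℝ) (hk₁ : -Real.log (1 - (μ : ℝ) / b) ≤ k₁)
    (hk₂ : Real.log (∑' n : ℕ, (2 : ℝ) ^ n * p n) ≤ k₂) :
    ∑ n ∈ Finset.Icc a b, Lop a b p n * Real.log (p n)
        + k₁ * ∑' n : ℕ, (if b + 1 ≤ n then (n : ℝ) * Lop a b p n else 0)
        + k₂ * ∑ n ∈ Finset.range a, ((a : ℝ) - n) * Lop a b p n ≤ 0 := by
  have ⟨hnn, h1, hμ⟩ := hp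
  have hab : a < b := hau.trans hub
  have hc : 0 < lamr b p := lamr_pos hnn hab (hpos a le_rfl hab.le)
  have hd : 0 < lamg a p := lamg_pos hnn h1.summable hab (hpos b hab.le le_rfl)
  have hS := sum_Icc_Lop_mul_log_le hab hnn h1 hpos hc hd
  rw [tsum_ite_mul_Lop_eq hab h1.summable hμ.summable, sum_range_mul_Lop_eq hab]
  have hK₁ := (log_lamg_sub_log_lamr_le (a := a) hp hub).trans hk₁
  have hK₂ := (log_lamr_sub_log_lamg_le (b := b) hp hau hC0 hd).trans hk₂
  have hk₁_nonneg : 0 ≤ k₁ := by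
    have hμb : (μ : ℝ) / b ≤ 1 := div_le_one_of_le₀ (by exact_mod_cast hub.le) b.cast_nonneg
    linarith [log_nonpos (sub_nonneg.2 hμb) (sub_le_self 1 (by positivity))]
  have hA : 0 ≤ ∑ n ∈ range a, p n := sum_nonneg fun n _ => hnn n
  linarith [mul_le_mul_of_nonneg_left hK₂ (mul_nonneg hd.le hA),
    mul_le_mul_of_nonneg_left hK₁ (mul_nonneg hc.le (tailSum_nonneg hnn (b + 1))),
    mul_nonneg (mul_nonneg hk₁_nonneg hc.le) (mul_nonneg b.cast_nonneg (hnn (b + 1)))]
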